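/- Let U in SpSt(2n,2k) and Δ in R^{2n×2k} with U^+Δ = -Δ^+U. Define Ω̄ := Δ(U^TU)^{-1}U^T + J_{2n}U(U^TU)^{-1}Δ^T(I_{2n} - J_{2n}^TU(U^TU)^{-1}U^TJ_{2n})J_{2n}. Then Ω̄ is Hamiltonian (Ω̄^+ = -Ω̄) and Ω̄ U = Δ. -/

import Mathlib

open Matrix

noncomputable section

/-- The standard symplectic matrix `J = [[0, I],[-I, 0]]` of size `2m`. -/
def Jmat (m : ℕ) : Matrix (Fin m ⊕ Fin m) (Fin m ⊕ Fin m) ℝ :=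
  Matrix.fromBlocks 0 1 (-1) 0

/-- The symplectic inverse `A⁺ = J₂ₖᵀ Aᵀ J₂ₙ` of a `2n × 2k` real matrix. -/
def sympInv {n k : ℕ} (A : Matrix (Fin n ⊕ Fin n) (Fin k ⊕ Fin k) ℝ) :
    Matrix (Fin k ⊕ Fin k) (Fin n ⊕ Fin n) ℝ :=
  (Jmat k)ᵀ * Aᵀ * Jmat n

/-!
Write `G = (UᵀU)⁻¹`. Since `J² = -1` and `Jᵀ = -J`, the factor `1 - JᵀUGUᵀJ` annihilates `JU`,
so `Ω̄U = ΔGUᵀU = Δ`. Being Hamiltonian means that `JΩ̄` is symmetric, and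
`JΩ̄ = JΔGUᵀ - UGΔᵀJ + UG(ΔᵀJU)GUᵀ`: the first two terms are each other's negative transposes,
and the last is symmetric because the tangency condition `U⁺Δ = -Δ⁺U` says exactly that `ΔᵀJU`
is symmetric. Finally `U⁺U = 1` makes `U` injective, so `UᵀU` is positive definite and `G` exists.
-/

section HamiltonianOfTangent

variable {m p R : Type*} [Fintype m] [Fintype p] [DecidableEq m] [DecidableEq p] [CommRing R]
  {J : Matrix m m R}

/-- The matrix `Ω̄` of the statement. -/
def hamiltonianOfTangent (J : Matrix m m R) (U Δ : Matrix m p R) : Matrix m m R :=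
  Δ * (Uᵀ * U)⁻¹ * Uᵀ
    + J * U * (Uᵀ * U)⁻¹ * Δᵀ * (1 - Jᵀ * U * (Uᵀ * U)⁻¹ * Uᵀ * J) * J

lemma mul_mul_eq_neg_of_mul_self_eq_neg_one (hJJ : J * J = -1) {q : Type*} (X : Matrix m q R) :
    J * (J * X) = -X := by
  rw [← Matrix.mul_assoc, hJJ, Matrix.neg_mul, Matrix.one_mul]

lemma one_sub_projector_mul_mul_eq_zero (hJT : Jᵀ = -J) (hJJ : J * J = -1) {U : Matrix m p R}
    (hU : IsUnit (Uᵀ * U).det) : (1 - Jᵀ * U * (Uᵀ * U)⁻¹ * Uᵀ * J) * (J * U) = 0 := by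
  calc (1 - Jᵀ * U * (Uᵀ * U)⁻¹ * Uᵀ * J) * (J * U)
      = J * U + Jᵀ * U * ((Uᵀ * U)⁻¹ * (Uᵀ * U)) := by
        simp only [Matrix.sub_mul, Matrix.one_mul, Matrix.mul_assoc,
          mul_mul_eq_neg_of_mul_self_eq_neg_one hJJ, Matrix.mul_neg, sub_neg_eq_add]
    _ = 0 := by rw [nonsing_inv_mul _ hU, hJT]; simp

lemma hamiltonianOfTangent_mul (hJT : Jᵀ = -J) (hJJ : J * J = -1) {U : Matrix m p R}
    (Δ : Matrix m p R) (hU : IsUnit (Uᵀ * U).det) : hamiltonianOfTangent J U Δ * U = Δ := by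
  calc hamiltonianOfTangent J U Δ * U
      = Δ * ((Uᵀ * U)⁻¹ * (Uᵀ * U)) + J * U * (Uᵀ * U)⁻¹ * Δᵀ
          * ((1 - Jᵀ * U * (Uᵀ * U)⁻¹ * Uᵀ * J) * (J * U)) := by
        simp only [hamiltonianOfTangent, Matrix.add_mul, Matrix.mul_assoc]
    _ = Δ := by rw [nonsing_inv_mul _ hU, one_sub_projector_mul_mul_eq_zero hJT hJJ hU]; simp

lemma mul_hamiltonianOfTangent (hJT : Jᵀ = -J) (hJJ : J * J = -1) (U Δ : Matrix m p R) :
    J * hamiltonianOfTangent J U Δ = J * Δ * (Uᵀ * U)⁻¹ * Uᵀ - U * (Uᵀ * U)⁻¹ * Δᵀ * J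
      + U * (Uᵀ * U)⁻¹ * (Δᵀ * J * U) * (Uᵀ * U)⁻¹ * Uᵀ := by
  simp only [hamiltonianOfTangent, hJT, Matrix.mul_add, Matrix.mul_sub, Matrix.sub_mul,
    Matrix.mul_one, Matrix.neg_mul, Matrix.mul_neg, Matrix.mul_assoc,
    mul_mul_eq_neg_of_mul_self_eq_neg_one hJJ, hJJ]
  abel

lemma isSymm_mul_hamiltonianOfTangent (hJT : Jᵀ = -J) (hJJ : J * J = -1) {U Δ : Matrix m p R}
    (hΔ : (Δᵀ * J * U).IsSymm) : (J * hamiltonianOfTangent J U Δ).IsSymm := by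
  have hG : ((Uᵀ * U)⁻¹)ᵀ = (Uᵀ * U)⁻¹ := by
    rw [transpose_nonsing_inv, transpose_mul, transpose_transpose]
  rw [IsSymm, mul_hamiltonianOfTangent hJT hJJ]
  set S := Δᵀ * J * U
  simp only [transpose_add, transpose_sub, transpose_mul, transpose_transpose, hG, hΔ.eq, hJT,
    Matrix.mul_neg, Matrix.neg_mul, Matrix.mul_assoc]
  abel

lemma transpose_mul_transpose_mul_eq_neg_of_isSymm_mul (hJT : Jᵀ = -J) (hJJ : J * J = -1)
    {Ω : Matrix m m R} (hΩ : (J * Ω).IsSymm) : Jᵀ * Ωᵀ * J = -Ω := by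
  have h : Ωᵀ * J = -(J * Ω) := by
    rw [← hΩ.eq, transpose_mul, hJT, Matrix.mul_neg, neg_neg]
  rw [hJT, Matrix.neg_mul, Matrix.neg_mul, Matrix.mul_assoc, h, Matrix.mul_neg, neg_neg,
    ← Matrix.mul_assoc, hJJ, Matrix.neg_mul, Matrix.one_mul]

end HamiltonianOfTangent

lemma Jmat_transpose (m : ℕ) : (Jmat m)ᵀ = -Jmat m := by
  simp [Jmat, fromBlocks_transpose, fromBlocks_neg]

lemma Jmat_mul_self (m : ℕ) : Jmat m * Jmat m = -1 := by
  simp [Jmat, fromBlocks_multiply, fromBlocks_neg, ← fromBlocks_one]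

lemma Jmat_mul_sympInv {n k : ℕ} (A : Matrix (Fin n ⊕ Fin n) (Fin k ⊕ Fin k) ℝ) :
    Jmat k * sympInv A = Aᵀ * Jmat n := by
  rw [sympInv, ← Matrix.mul_assoc, ← Matrix.mul_assoc, Jmat_transpose, Matrix.mul_neg,
    Jmat_mul_self, neg_neg, Matrix.one_mul]

lemma isSymm_transpose_mul_Jmat_mul_of_sympInv_mul_eq_neg {n k : ℕ}
    {U Δ : Matrix (Fin n ⊕ Fin n) (Fin k ⊕ Fin k) ℝ} (hΔ : sympInv U * Δ = -(sympInv Δ * U)) :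
    (Δᵀ * Jmat n * U).IsSymm := by
  have h : Uᵀ * Jmat n * Δ = -(Δᵀ * Jmat n * U) := by
    simpa only [← Matrix.mul_assoc, Jmat_mul_sympInv, Matrix.mul_neg] using
      congrArg (Jmat k * ·) hΔ
  rw [IsSymm, transpose_mul, transpose_mul, transpose_transpose, Jmat_transpose,
    ← Matrix.mul_assoc, Matrix.mul_neg, Matrix.neg_mul, h, neg_neg]

lemma isUnit_det_transpose_mul_self_of_mul_eq_one {m p : Type*} [Fintype m] [Fintype p]
    [DecidableEq p] {L : Matrix p m ℝ} {U : Matrix m p ℝ} (h : L * U = 1) :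
    IsUnit (Uᵀ * U).det := by
  have hinj : Function.Injective U.mulVec := fun x y hxy => by
    simpa only [mulVec_mulVec, h, one_mulVec] using congrArg L.mulVec hxy
  exact (isUnit_iff_isUnit_det _).mp (PosDef.conjTranspose_mul_self U hinj).isUnit

theorem stmt_15 (n k : ℕ) (U Δ : Matrix (Fin n ⊕ Fin n) (Fin k ⊕ Fin k) ℝ)
    (hU : sympInv U * U = 1) (hΔ : sympInv U * Δ = -(sympInv Δ * U))
    (Ω : Matrix (Fin n ⊕ Fin n) (Fin n ⊕ Fin n) ℝ)
    (hΩ : Ω = Δ * (Uᵀ * U)⁻¹ * Uᵀ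
        + Jmat n * U * (Uᵀ * U)⁻¹ * Δᵀ
          * (1 - (Jmat n)ᵀ * U * (Uᵀ * U)⁻¹ * Uᵀ * Jmat n) * Jmat n) :
    sympInv Ω = -Ω ∧ Ω * U = Δ := by
  obtain rfl : Ω = hamiltonianOfTangent (Jmat n) U Δ := hΩ
  have hJT := Jmat_transpose n
  have hJJ := Jmat_mul_self n
  exact ⟨transpose_mul_transpose_mul_eq_neg_of_isSymm_mul hJT hJJ
      (isSymm_mul_hamiltonianOfTangent hJT hJJ
        (isSymm_transpose_mul_Jmat_mul_of_sympInv_mul_eq_neg hΔ)),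
    hamiltonianOfTangent_mul hJT hJJ Δ (isUnit_det_transpose_mul_self_of_mul_eq_one hU)⟩
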